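/- arXiv:2401.00478 — 7 statements merged into one kernel-verified Lean document; each statement's English description precedes it below -/
import Mathlib

section
/- Let p₁ > 0 and let D, R, I : ℝ → ℝ be differentiable functions satisfying D' = 2p₁·I·D, R' = 2p₁·I·R, I' = -2p₁(D² + R²) on ℝ. Set ρ := √(D(0)² + R(0)² + I(0)²) and assume (D(0),R(0),I(0)) ≠ (0,0,ρ) and (D(0),R(0),I(0)) ≠ (0,0,-ρ). Then for all τ ∈ ℝ: D(τ) = (ρ·D(0)/√(D(0)²+R(0)²)) / cosh(2p₁ρτ - artanh(I(0)/ρ)), R(τ) = (ρ·R(0)/√(D(0)²+R(0)²)) / cosh(2p₁ρτ - artanh(I(0)/ρ)), and I(τ) = -ρ·tanh(2p₁ρτ - artanh(I(0)/ρ)). -/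
/-!
`D` and `R` solve the same linear equation `f' = 2p₁ I f`, so both are their initial values times
the common positive factor `E = exp (2p₁ ∫₀^τ I)`. The quantity `D² + R² + I²` is conserved, hence
equal to `ρ²`, so `I` solves the Riccati equation `I' = -2p₁ (ρ² - I²)`; away from the poles
`ρ² - I² = (D(0)² + R(0)²) E² > 0`. Along such a solution `artanh (I / ρ)` moves with constant
speed `-2p₁ρ`, which gives `I = -ρ tanh θ`, and then `(D(0)² + R(0)²) E² = ρ² / cosh² θ`
determines `E`.
-/

/-- The real inverse hyperbolic tangent. -/
noncomputable def artanh (x : ℝ) : ℝ := Real.log ((1 + x) / (1 - x)) / 2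

lemma eq_apply_zero_of_hasDerivAt_zero {f : ℝ → ℝ} (hf : ∀ t, HasDerivAt f 0 t) (t : ℝ) :
    f t = f 0 :=
  is_const_of_deriv_eq_zero (fun s ↦ (hf s).differentiableAt) (fun s ↦ (hf s).deriv) t 0

lemma eq_mul_exp_integral_of_hasDerivAt {f g : ℝ → ℝ} (hg : Continuous g)
    (hf : ∀ t, HasDerivAt f (g t * f t) t) (t : ℝ) :
    f t = f 0 * Real.exp (∫ s in (0 : ℝ)..t, g s) := by
  have hG : ∀ t, HasDerivAt (fun t ↦ ∫ s in (0 : ℝ)..t, g s) (g t) t :=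
    fun t ↦ (hg.integral_hasStrictDerivAt 0 t).hasDerivAt
  have hconst := eq_apply_zero_of_hasDerivAt_zero
    (f := fun t ↦ f t * Real.exp (-∫ s in (0 : ℝ)..t, g s))
    (fun t ↦ ((hf t).mul (hG t).neg.exp).congr_deriv (by ring)) t
  simp only [intervalIntegral.integral_same, neg_zero, Real.exp_zero, mul_one] at hconst
  rw [← hconst, mul_assoc, ← Real.exp_add, neg_add_cancel, Real.exp_zero, mul_one]

lemma artanh_eq_real_artanh {x : ℝ} (hx : x ∈ Set.Ioo (-1) 1) : artanh x = Real.artanh x := by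
  rw [Real.artanh_eq_half_log (Set.Ioo_subset_Icc_self hx), artanh]
  ring

lemma hasDerivAt_artanh {x : ℝ} (hx : x ∈ Set.Ioo (-1) 1) :
    HasDerivAt artanh (1 - x ^ 2)⁻¹ x := by
  have h₁ : 0 < 1 + x := by linarith [hx.1]
  have h₂ : 0 < 1 - x := by linarith [hx.2]
  have h₃ : 1 - x ^ 2 ≠ 0 := by nlinarith
  have hq := ((hasDerivAt_id x).const_add 1).div ((hasDerivAt_id x).const_sub 1) h₂.ne'
  refine ((hq.log (div_pos h₁ h₂).ne').div_const 2).congr_deriv ?_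
  simp only [Pi.div_apply, id]
  field_simp
  ring

theorem eq_neg_mul_tanh_of_hasDerivAt {I : ℝ → ℝ} {k ρ : ℝ} (hρ : 0 < ρ)
    (hI : ∀ t, HasDerivAt I (-(k * (ρ ^ 2 - I t ^ 2))) t) (hbound : ∀ t, |I t| < ρ) (t : ℝ) :
    I t = -ρ * Real.tanh (k * ρ * t - artanh (I 0 / ρ)) := by
  have hmem : ∀ t, I t / ρ ∈ Set.Ioo (-1) 1 := fun t ↦ by
    rw [Set.mem_Ioo, ← abs_lt, abs_div, abs_of_pos hρ, div_lt_one hρ]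
    exact hbound t
  have hlin := eq_apply_zero_of_hasDerivAt_zero
    (f := fun t ↦ artanh (I t / ρ) + k * ρ * t) (fun t ↦ by
      refine (((hasDerivAt_artanh (hmem t)).comp t ((hI t).div_const ρ)).add
        ((hasDerivAt_id t).const_mul (k * ρ))).congr_deriv ?_
      obtain ⟨hlo, hhi⟩ := abs_lt.mp (hbound t)
      have : ρ ^ 2 - I t ^ 2 ≠ 0 := (sub_pos.mpr (sq_lt_sq' hlo hhi)).ne'
      field_simp
      ring) t
  have harg : k * ρ * t - artanh (I 0 / ρ) = -Real.artanh (I t / ρ) := by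
    simp only [mul_zero, add_zero] at hlin
    rw [← artanh_eq_real_artanh (hmem t)]
    linarith
  rw [harg, Real.tanh_neg, Real.tanh_artanh (hmem t)]
  field_simp

lemma eq_div_sqrt_mul_cosh {E S ρ θ : ℝ} (hE : 0 < E) (hS : 0 < S) (hρ : 0 ≤ ρ)
    (h : S * E ^ 2 = ρ ^ 2 - (ρ * Real.tanh θ) ^ 2) :
    E = ρ / (Real.sqrt S * Real.cosh θ) := by
  have hcosh := Real.cosh_pos θ
  refine (sq_eq_sq₀ hE.le (by positivity)).mp ?_
  rw [div_pow, mul_pow, Real.sq_sqrt hS.le, eq_div_iff (by positivity), ← mul_assoc,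
    mul_comm _ S, h, Real.tanh_eq_sinh_div_cosh]
  field_simp
  linear_combination ρ ^ 2 * Real.cosh_sq_sub_sinh_sq θ

lemma sq_add_sq_pos_of_ne_of_ne {a b c ρ : ℝ} (hρ : ρ = Real.sqrt (a ^ 2 + b ^ 2 + c ^ 2))
    (h₁ : (a, b, c) ≠ (0, 0, ρ)) (h₂ : (a, b, c) ≠ (0, 0, -ρ)) : 0 < a ^ 2 + b ^ 2 := by
  refine (add_nonneg (sq_nonneg a) (sq_nonneg b)).lt_of_ne fun h ↦ ?_
  have ha : a = 0 := by nlinarith [sq_nonneg a, sq_nonneg b]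
  have hb : b = 0 := by nlinarith [sq_nonneg a, sq_nonneg b]
  subst ha hb
  simp only [ne_eq, Prod.mk.injEq, true_and] at h₁ h₂
  rw [hρ, zero_pow two_ne_zero, zero_add, zero_add, Real.sqrt_sq_eq_abs] at h₁ h₂
  rcases abs_choice c with hc | hc
  · exact h₁ hc.symm
  · exact h₂ (by linarith)

lemma sum_sq_eq_of_hasDerivAt {p₁ : ℝ} {D R I : ℝ → ℝ}
    (hD : ∀ τ, HasDerivAt D (2 * p₁ * I τ * D τ) τ)
    (hR : ∀ τ, HasDerivAt R (2 * p₁ * I τ * R τ) τ)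
    (hI : ∀ τ, HasDerivAt I (-(2 * p₁ * (D τ ^ 2 + R τ ^ 2))) τ) (t : ℝ) :
    D t ^ 2 + R t ^ 2 + I t ^ 2 = D 0 ^ 2 + R 0 ^ 2 + I 0 ^ 2 :=
  eq_apply_zero_of_hasDerivAt_zero (f := fun t ↦ D t ^ 2 + R t ^ 2 + I t ^ 2)
    (fun t ↦ ((((hD t).pow 2).add ((hR t).pow 2)).add ((hI t).pow 2)).congr_deriv (by ring)) t

theorem stmt_1_general (p₁ : ℝ) (D R I : ℝ → ℝ)
    (hD : ∀ τ, HasDerivAt D (2 * p₁ * I τ * D τ) τ)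
    (hR : ∀ τ, HasDerivAt R (2 * p₁ * I τ * R τ) τ)
    (hI : ∀ τ, HasDerivAt I (-(2 * p₁ * (D τ ^ 2 + R τ ^ 2))) τ)
    (ρ : ℝ) (hρ : ρ = Real.sqrt (D 0 ^ 2 + R 0 ^ 2 + I 0 ^ 2))
    (hne₁ : (D 0, R 0, I 0) ≠ (0, 0, ρ))
    (hne₂ : (D 0, R 0, I 0) ≠ (0, 0, -ρ)) :
    ∀ τ : ℝ,
      D τ = ρ * D 0 / Real.sqrt (D 0 ^ 2 + R 0 ^ 2)
              / Real.cosh (2 * p₁ * ρ * τ - artanh (I 0 / ρ)) ∧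
      R τ = ρ * R 0 / Real.sqrt (D 0 ^ 2 + R 0 ^ 2)
              / Real.cosh (2 * p₁ * ρ * τ - artanh (I 0 / ρ)) ∧
      I τ = -ρ * Real.tanh (2 * p₁ * ρ * τ - artanh (I 0 / ρ)) := by
  have hS₀ : 0 < D 0 ^ 2 + R 0 ^ 2 := sq_add_sq_pos_of_ne_of_ne hρ hne₁ hne₂
  have hρ_pos : 0 < ρ := hρ ▸ Real.sqrt_pos.mpr (by positivity)
  have hρ_sq : ρ ^ 2 = D 0 ^ 2 + R 0 ^ 2 + I 0 ^ 2 := hρ ▸ Real.sq_sqrt (by positivity)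
  have hI_cont : Continuous I := continuous_iff_continuousAt.2 fun t ↦ (hI t).continuousAt
  set E : ℝ → ℝ := fun t ↦ Real.exp (∫ s in (0 : ℝ)..t, 2 * p₁ * I s)
  have hDE : ∀ t, D t = D 0 * E t := eq_mul_exp_integral_of_hasDerivAt (by fun_prop) hD
  have hRE : ∀ t, R t = R 0 * E t := eq_mul_exp_integral_of_hasDerivAt (by fun_prop) hR
  have hcons : ∀ t, (D 0 ^ 2 + R 0 ^ 2) * E t ^ 2 = ρ ^ 2 - I t ^ 2 := fun t ↦ by
    linear_combination -(D t + D 0 * E t) * hDE t - (R t + R 0 * E t) * hRE t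
      + sum_sq_eq_of_hasDerivAt hD hR hI t - hρ_sq
  have hI_lt : ∀ t, |I t| < ρ := fun t ↦ abs_lt_of_sq_lt_sq
    (by nlinarith [hcons t, mul_pos hS₀ (pow_pos (Real.exp_pos _) 2 : 0 < E t ^ 2)]) hρ_pos.le
  have hI_eq := eq_neg_mul_tanh_of_hasDerivAt (k := 2 * p₁) hρ_pos
    (fun t ↦ (hI t).congr_deriv (by rw [← hcons t, hDE t, hRE t]; ring)) hI_lt
  intro τ
  have hE : E τ = ρ / (Real.sqrt (D 0 ^ 2 + R 0 ^ 2)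
      * Real.cosh (2 * p₁ * ρ * τ - artanh (I 0 / ρ))) :=
    eq_div_sqrt_mul_cosh (Real.exp_pos _) hS₀ hρ_pos.le (by rw [hcons, hI_eq τ, neg_mul, neg_sq])
  refine ⟨?_, ?_, hI_eq τ⟩
  · rw [hDE τ, hE, div_div]
    ring
  · rw [hRE τ, hE, div_div]
    ring

/-- Case 1 (pure p₁-component) of the quadratic system: explicit solution. -/
theorem stmt_1 (p₁ : ℝ) (hp₁ : 0 < p₁) (D R I : ℝ → ℝ)
    (hD : ∀ τ, HasDerivAt D (2 * p₁ * I τ * D τ) τ)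
    (hR : ∀ τ, HasDerivAt R (2 * p₁ * I τ * R τ) τ)
    (hI : ∀ τ, HasDerivAt I (-(2 * p₁ * (D τ ^ 2 + R τ ^ 2))) τ)
    (ρ : ℝ) (hρ : ρ = Real.sqrt (D 0 ^ 2 + R 0 ^ 2 + I 0 ^ 2))
    (hne₁ : (D 0, R 0, I 0) ≠ (0, 0, ρ))
    (hne₂ : (D 0, R 0, I 0) ≠ (0, 0, -ρ)) :
    ∀ τ : ℝ,
      D τ = ρ * D 0 / Real.sqrt (D 0 ^ 2 + R 0 ^ 2)
              / Real.cosh (2 * p₁ * ρ * τ - artanh (I 0 / ρ)) ∧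
      R τ = ρ * R 0 / Real.sqrt (D 0 ^ 2 + R 0 ^ 2)
              / Real.cosh (2 * p₁ * ρ * τ - artanh (I 0 / ρ)) ∧
      I τ = -ρ * Real.tanh (2 * p₁ * ρ * τ - artanh (I 0 / ρ)) :=
  stmt_1_general p₁ D R I hD hR hI ρ hρ hne₁ hne₂
end

section
/- Let p₁ > p₄ > 0, ρ > 0, and set a := p₄/p₁ ∈ (0,1). Let D, R, I : ℝ → ℝ be differentiable functions satisfying D' = 2p₁·I·D, R' = 2p₁·I·R - 2p₄ρ·I, I' = -2p₁(D² + R²) + 2p₄ρ·R on ℝ, with D(0)² + R(0)² + I(0)² = ρ², and assume (D(0),R(0),I(0)) is not one of the two fixed points (0, aρ, ±ρ√(1-a²)). Set M := √((aρ - R(0))² + (1-a²)·D(0)²). Then there exists τ₀ ∈ ℝ with τ₀·I(0) ≥ 0 and (1-a²)ρ / (M·cosh(τ₀) - a(aρ - R(0))) = 1 such that for all τ ∈ ℝ: D(τ) = (1-a²)ρ·D(0) / (M·cosh(2p₁ρ√(1-a²)·τ - τ₀) - a(aρ - R(0))), R(τ) = aρ + (1-a²)ρ·(R(0) - aρ)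 / (M·cosh(2p₁ρ√(1-a²)·τ - τ₀) - a(aρ - R(0))), and I(τ) = -ρ√(1-a²)·M·sinh(2p₁ρ√(1-a²)·τ - τ₀) / (M·cosh(2p₁ρ√(1-a²)·τ - τ₀) - a(aρ - R(0))). In particular (D(τ),R(τ),I(τ)) → (0, aρ, ∓ρ√(1-a²)) as τ → ±∞. -/
/-!
The sum `D² + R² + I²` is a first integral, so every solution stays in a compact ball, on
which the polynomial vector field is Lipschitz; hence a solution is determined by its value
at `0`, and it suffices to exhibit the closed-form orbit and check it against the system.

Writing `s = √(1 - a²)` and `Φ = M cosh u - a (aρ - R(0))`, each of `D` and `R - aρ` is a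
constant multiple of `1 / Φ`, whose logarithmic derivative in `τ` is `2 p₁ I`. The equation
for `I` reduces to `cosh² - sinh² = 1` together with `M² = (aρ - R(0))² + s² D(0)²`. On the
sphere, `(ρ - a R(0))² - (s I(0))² = M²` with `ρ - a R(0) > 0`, which yields the phase `τ₀`
with `M cosh τ₀ = ρ - a R(0)` and `M sinh τ₀ = s I(0)`, i.e. the orbit starts at the given
point. Away from the fixed points `M > 0`, so `Φ → ∞` and `M sinh u / Φ → ±1` as
`u → ±∞`.
-/

open Filter Metric Real Topology

theorem ODE_solution_unique_univ_of_locallyLipschitz {E : Type*} [NormedAddCommGroup E]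
    [NormedSpace ℝ E] {v : E → E} (hv : LocallyLipschitz v) {K : Set E} (hK : IsCompact K)
    {f g : ℝ → E} {t₀ : ℝ} (hf : ∀ t, HasDerivAt f (v (f t)) t ∧ f t ∈ K)
    (hg : ∀ t, HasDerivAt g (v (g t)) t ∧ g t ∈ K) (heq : f t₀ = g t₀) : f = g := by
  obtain ⟨L, hL⟩ := hv.locallyLipschitzOn.exists_lipschitzOnWith_of_compact hK
  exact ODE_solution_unique_univ (v := fun _ => v) (fun _ => hL) hf hg heq

theorem mem_closedBall_sqrt_sum_sq (x y z : ℝ) :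
    (x, y, z) ∈ closedBall (0 : ℝ × ℝ × ℝ) √(x ^ 2 + y ^ 2 + z ^ 2) := by
  simp only [mem_closedBall_zero_iff, Prod.norm_mk, norm_eq_abs, sup_le_iff]
  refine ⟨abs_le_sqrt ?_, abs_le_sqrt ?_, abs_le_sqrt ?_⟩ <;>
    nlinarith [sq_nonneg x, sq_nonneg y, sq_nonneg z]

namespace Real

theorem mul_sinh_nonneg (t : ℝ) : 0 ≤ t * sinh t := by
  rcases le_total 0 t with ht | ht
  · exact mul_nonneg ht (sinh_nonneg_iff.2 ht)
  · exact mul_nonneg_of_nonpos_of_nonpos ht (sinh_nonpos_iff.2 ht)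

theorem tendsto_cosh_atTop : Tendsto cosh atTop atTop :=
  tendsto_atTop_mono' _ ((eventually_ge_atTop 0).mono fun _ hu =>
    (self_le_sinh_iff.2 hu).trans (sinh_lt_cosh _).le) tendsto_id

theorem tendsto_cosh_atBot : Tendsto cosh atBot atTop := by
  simpa [Function.comp_def] using tendsto_cosh_atTop.comp tendsto_neg_atBot_atTop

end Real

section Hyperbolic

variable {M : ℝ}

theorem exists_mul_cosh_eq_and_mul_sinh_eq {X Y : ℝ} (hM : 0 < M) (hX : 0 < X)
    (h : X ^ 2 = M ^ 2 + Y ^ 2) : ∃ t, M * cosh t = X ∧ M * sinh t = Y := by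
  refine ⟨arsinh (Y / M), ?_, by rw [sinh_arsinh]; field_simp⟩
  have h1 : 1 + (Y / M) ^ 2 = (X / M) ^ 2 := by
    field_simp
    linarith
  rw [cosh_arsinh, h1, sqrt_sq (by positivity)]
  field_simp

theorem mul_cosh_sub_mul_pos {a q : ℝ} (hM : 0 < M) (ha₀ : 0 ≤ a) (ha₁ : a < 1)
    (hq : |q| ≤ M) (u : ℝ) : 0 < M * cosh u - a * q := by
  have h1 : M ≤ M * cosh u := le_mul_of_one_le_right hM.le (one_le_cosh u)
  have h2 : a * q ≤ a * M := mul_le_mul_of_nonneg_left (le_of_abs_le hq) ha₀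
  nlinarith

variable {b ω τ₀ : ℝ}

theorem hasDerivAt_mul_cosh_sub (τ : ℝ) :
    HasDerivAt (fun τ => M * cosh (ω * τ - τ₀) - b) (M * (sinh (ω * τ - τ₀) * ω)) τ :=
  ((((hasDerivAt_id' τ).const_mul ω).sub_const τ₀).congr_deriv (mul_one ω)).cosh.const_mul M
    |>.sub_const b

theorem hasDerivAt_div_mul_cosh_sub (C τ : ℝ) (hΦ : M * cosh (ω * τ - τ₀) - b ≠ 0) :
    HasDerivAt (fun τ => C / (M * cosh (ω * τ - τ₀) - b))
      (-(ω * M * sinh (ω * τ - τ₀)) / (M * cosh (ω * τ - τ₀) - b)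
        * (C / (M * cosh (ω * τ - τ₀) - b))) τ :=
  ((hasDerivAt_const τ C).div (hasDerivAt_mul_cosh_sub τ) hΦ).congr_deriv (by
    field_simp
    ring)

variable (b)

theorem tendsto_mul_cosh_sub_atTop (hM : 0 < M) :
    Tendsto (fun u => M * cosh u - b) atTop atTop :=
  tendsto_atTop_add_const_right _ _ (tendsto_cosh_atTop.const_mul_atTop hM)

theorem tendsto_mul_cosh_sub_atBot (hM : 0 < M) :
    Tendsto (fun u => M * cosh u - b) atBot atTop :=
  tendsto_atTop_add_const_right _ _ (tendsto_cosh_atBot.const_mul_atTop hM)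

theorem tendsto_mul_sinh_div_mul_cosh_sub_atTop (hM : 0 < M) :
    Tendsto (fun u => M * sinh u / (M * cosh u - b)) atTop (𝓝 1) := by
  have hexp : Tendsto (fun u => M * exp (-u) - b) atTop (𝓝 (M * 0 - b)) :=
    (tendsto_exp_neg_atTop_nhds_zero.const_mul M).sub_const b
  have hrem := hexp.div_atTop (tendsto_mul_cosh_sub_atTop b hM)
  rw [← sub_zero (1 : ℝ)]
  refine (tendsto_const_nhds.sub hrem).congr' ?_
  filter_upwards [(tendsto_mul_cosh_sub_atTop b hM).eventually_gt_atTop 0] with u hu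
  rw [← cosh_sub_sinh]
  field_simp
  ring

theorem tendsto_mul_sinh_div_mul_cosh_sub_atBot (hM : 0 < M) :
    Tendsto (fun u => M * sinh u / (M * cosh u - b)) atBot (𝓝 (-1)) :=
  ((tendsto_mul_sinh_div_mul_cosh_sub_atTop b hM).comp tendsto_neg_atBot_atTop).neg.congr
    fun u => by simp [neg_div]

end Hyperbolic

section CaseSix

variable {p₁ p₄ ρ : ℝ}

def caseSixField (p₁ p₄ ρ : ℝ) (x : ℝ × ℝ × ℝ) : ℝ × ℝ × ℝ :=
  (2 * p₁ * x.2.2 * x.1, 2 * p₁ * x.2.2 * x.2.1 - 2 * p₄ * ρ * x.2.2,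
    -(2 * p₁ * (x.1 ^ 2 + x.2.1 ^ 2)) + 2 * p₄ * ρ * x.2.1)

theorem contDiff_caseSixField (p₁ p₄ ρ : ℝ) :
    ContDiff ℝ 1 (caseSixField p₁ p₄ ρ) := by
  unfold caseSixField
  fun_prop

def IsCaseSixSolution (p₁ p₄ ρ : ℝ) (D R I : ℝ → ℝ) : Prop :=
  ∀ τ, HasDerivAt D (2 * p₁ * I τ * D τ) τ ∧
    HasDerivAt R (2 * p₁ * I τ * R τ - 2 * p₄ * ρ * I τ) τ ∧
    HasDerivAt I (-(2 * p₁ * (D τ ^ 2 + R τ ^ 2)) + 2 * p₄ * ρ * R τ) τ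

namespace IsCaseSixSolution

variable {D R I D' R' I' : ℝ → ℝ}

theorem hasDerivAt_prodMk (h : IsCaseSixSolution p₁ p₄ ρ D R I) (τ : ℝ) :
    HasDerivAt (fun t => (D t, R t, I t)) (caseSixField p₁ p₄ ρ (D τ, R τ, I τ)) τ :=
  (h τ).1.prodMk ((h τ).2.1.prodMk (h τ).2.2)

theorem sum_sq_eq (h : IsCaseSixSolution p₁ p₄ ρ D R I) (τ : ℝ) :
    D τ ^ 2 + R τ ^ 2 + I τ ^ 2 = D 0 ^ 2 + R 0 ^ 2 + I 0 ^ 2 := by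
  have hN (t : ℝ) : HasDerivAt (fun t => D t ^ 2 + R t ^ 2 + I t ^ 2) 0 t := by
    obtain ⟨hD, hR, hI⟩ := h t
    exact (((hD.pow 2).add (hR.pow 2)).add (hI.pow 2)).congr_deriv (by push_cast; ring)
  exact is_const_of_deriv_eq_zero (fun t => (hN t).differentiableAt) (fun t => (hN t).deriv) τ 0

theorem eq_of_eq_zero (h : IsCaseSixSolution p₁ p₄ ρ D R I)
    (h' : IsCaseSixSolution p₁ p₄ ρ D' R' I') (h0 : (D 0, R 0, I 0) = (D' 0, R' 0, I' 0)) :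
    (fun t => (D t, R t, I t)) = fun t => (D' t, R' t, I' t) := by
  obtain ⟨hD0, hR0, hI0⟩ : D 0 = D' 0 ∧ R 0 = R' 0 ∧ I 0 = I' 0 := by simpa using h0
  refine ODE_solution_unique_univ_of_locallyLipschitz
    (contDiff_caseSixField p₁ p₄ ρ).locallyLipschitz
    (isCompact_closedBall 0 √(D 0 ^ 2 + R 0 ^ 2 + I 0 ^ 2))
    (fun t => ⟨h.hasDerivAt_prodMk t, ?_⟩) (fun t => ⟨h'.hasDerivAt_prodMk t, ?_⟩) h0
  · rw [← h.sum_sq_eq t]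
    exact mem_closedBall_sqrt_sum_sq _ _ _
  · rw [hD0, hR0, hI0, ← h'.sum_sq_eq t]
    exact mem_closedBall_sqrt_sum_sq _ _ _

end IsCaseSixSolution

theorem radicand_pos_of_ne_fixedPoints {a s D₀ R₀ I₀ : ℝ} (hb : 0 < 1 - a ^ 2)
    (hs : s ^ 2 = 1 - a ^ 2) (hsph : D₀ ^ 2 + R₀ ^ 2 + I₀ ^ 2 = ρ ^ 2)
    (hne₁ : (D₀, R₀, I₀) ≠ (0, a * ρ, ρ * s))
    (hne₂ : (D₀, R₀, I₀) ≠ (0, a * ρ, -(ρ * s))) :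
    0 < (a * ρ - R₀) ^ 2 + (1 - a ^ 2) * D₀ ^ 2 := by
  by_contra! h
  have hR : (a * ρ - R₀) ^ 2 = 0 :=
    le_antisymm (by nlinarith [mul_nonneg hb.le (sq_nonneg D₀)]) (sq_nonneg _)
  have hD : D₀ ^ 2 = 0 := le_antisymm (by nlinarith [sq_nonneg (a * ρ - R₀)]) (sq_nonneg _)
  obtain rfl := pow_eq_zero_iff two_ne_zero |>.1 hD
  obtain rfl := sub_eq_zero.1 (pow_eq_zero_iff two_ne_zero |>.1 hR)
  have hI : (I₀ - ρ * s) * (I₀ + ρ * s) = 0 := by linear_combination hsph - ρ ^ 2 * hs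
  rcases mul_eq_zero.1 hI with hI | hI
  · exact hne₁ (by rw [sub_eq_zero.1 hI])
  · exact hne₂ (by rw [eq_neg_of_add_eq_zero_left hI])

noncomputable def caseSixOrbit (p₁ ρ a s M τ₀ D₀ R₀ τ : ℝ) : ℝ × ℝ × ℝ :=
  let u := 2 * p₁ * ρ * s * τ - τ₀
  let Φ := M * cosh u - a * (a * ρ - R₀)
  ((1 - a ^ 2) * ρ * D₀ / Φ, a * ρ + (1 - a ^ 2) * ρ * (R₀ - a * ρ) / Φ,
    -(ρ * s * M * sinh u) / Φ)

variable {a s M τ₀ D₀ R₀ I₀ : ℝ}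

theorem isCaseSixSolution_caseSixOrbit (hp₄ : p₄ = a * p₁) (hs : s ^ 2 = 1 - a ^ 2)
    (hM : M ^ 2 = (a * ρ - R₀) ^ 2 + (1 - a ^ 2) * D₀ ^ 2)
    (hΦ : ∀ u, M * cosh u - a * (a * ρ - R₀) ≠ 0) :
    IsCaseSixSolution p₁ p₄ ρ (fun τ => (caseSixOrbit p₁ ρ a s M τ₀ D₀ R₀ τ).1)
      (fun τ => (caseSixOrbit p₁ ρ a s M τ₀ D₀ R₀ τ).2.1)
      (fun τ => (caseSixOrbit p₁ ρ a s M τ₀ D₀ R₀ τ).2.2) := by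
  subst hp₄
  intro τ
  dsimp only [caseSixOrbit]
  have hΦu := hΦ (2 * p₁ * ρ * s * τ - τ₀)
  have hsinh : HasDerivAt (fun τ => -(ρ * s * M * sinh (2 * p₁ * ρ * s * τ - τ₀)))
      (-(ρ * s * M * (cosh (2 * p₁ * ρ * s * τ - τ₀) * (2 * p₁ * ρ * s)))) τ :=
    ((((hasDerivAt_id' τ).const_mul _).sub_const τ₀).congr_deriv (mul_one _)).sinh.const_mul _
      |>.neg
  refine ⟨(hasDerivAt_div_mul_cosh_sub _ τ hΦu).congr_deriv ?_,
    ((hasDerivAt_div_mul_cosh_sub _ τ hΦu).const_add (a * ρ)).congr_deriv ?_,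
    (hsinh.div (hasDerivAt_mul_cosh_sub τ) hΦu).congr_deriv ?_⟩ <;>
  -- abstracting the phase and `Φ` keeps `field_simp` from rewriting inside `cosh`,
  -- where it would lose sight of `hΦu`
  generalize 2 * p₁ * ρ * s * τ - τ₀ = u at hΦu ⊢ <;>
  have hcs := cosh_sq u <;>
  generalize hΦ' : M * cosh u - a * (a * ρ - R₀) = Φ at hΦu ⊢ <;>
  field_simp
  · ring
  · linear_combination (-(ρ ^ 2 * p₁ * M * (cosh u * Φ - M * sinh u ^ 2))) * hs
      + (ρ ^ 2 * p₁ * (1 - a ^ 2) * (M * cosh u + a * (a * ρ - R₀))) * hΦ'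
      - (ρ ^ 2 * p₁ * (1 - a ^ 2) * M ^ 2) * hcs - (ρ ^ 2 * p₁ * (1 - a ^ 2)) * hM

theorem caseSixOrbit_zero (hs : s ^ 2 = 1 - a ^ 2) (hs₀ : s ≠ 0) (hρ : ρ ≠ 0)
    (hc : M * cosh τ₀ - a * (a * ρ - R₀) = (1 - a ^ 2) * ρ)
    (hsn : M * sinh τ₀ = s * I₀) :
    caseSixOrbit p₁ ρ a s M τ₀ D₀ R₀ 0 = (D₀, R₀, I₀) := by
  have hb : 1 - a ^ 2 ≠ 0 := hs ▸ pow_ne_zero 2 hs₀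
  simp only [caseSixOrbit, mul_zero, zero_sub, cosh_neg, sinh_neg, hc, Prod.mk.injEq]
  refine ⟨by field_simp, by field_simp; ring, ?_⟩
  rw [mul_neg, neg_neg, mul_assoc, hsn, ← hs]
  field_simp

theorem tendsto_caseSixOrbit {L L' : Filter ℝ} {σ : ℝ}
    (hu : Tendsto (fun τ => 2 * p₁ * ρ * s * τ - τ₀) L L')
    (hΦ : Tendsto (fun u => M * cosh u - a * (a * ρ - R₀)) L' atTop)
    (hw : Tendsto (fun u => M * sinh u / (M * cosh u - a * (a * ρ - R₀))) L' (𝓝 σ)) :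
    Tendsto (caseSixOrbit p₁ ρ a s M τ₀ D₀ R₀) L (𝓝 (0, a * ρ, -(ρ * s * σ))) := by
  have hR : Tendsto (fun u => a * ρ + (1 - a ^ 2) * ρ * (R₀ - a * ρ)
      / (M * cosh u - a * (a * ρ - R₀))) L' (𝓝 (a * ρ)) := by
    simpa using tendsto_const_nhds.add (tendsto_const_nhds.div_atTop hΦ)
  have hI : Tendsto (fun u => -(ρ * s * M * sinh u) / (M * cosh u - a * (a * ρ - R₀))) L'
      (𝓝 (-(ρ * s * σ))) :=
    ((hw.const_mul (ρ * s)).neg).congr fun u => by ring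
  exact ((tendsto_const_nhds.div_atTop hΦ).prodMk_nhds (hR.prodMk_nhds hI)).comp hu

theorem tendsto_caseSixOrbit_atTop (hM : 0 < M) (hω : 0 < 2 * p₁ * ρ * s) :
    Tendsto (caseSixOrbit p₁ ρ a s M τ₀ D₀ R₀) atTop (𝓝 (0, a * ρ, -(ρ * s))) := by
  simpa using tendsto_caseSixOrbit (D₀ := D₀)
    (tendsto_atTop_add_const_right _ _ (tendsto_id.const_mul_atTop hω))
    (tendsto_mul_cosh_sub_atTop _ hM) (tendsto_mul_sinh_div_mul_cosh_sub_atTop _ hM)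

theorem tendsto_caseSixOrbit_atBot (hM : 0 < M) (hω : 0 < 2 * p₁ * ρ * s) :
    Tendsto (caseSixOrbit p₁ ρ a s M τ₀ D₀ R₀) atBot (𝓝 (0, a * ρ, ρ * s)) := by
  simpa using tendsto_caseSixOrbit (D₀ := D₀)
    (tendsto_atBot_add_const_right _ _ (tendsto_id.const_mul_atBot hω))
    (tendsto_mul_cosh_sub_atBot _ hM) (tendsto_mul_sinh_div_mul_cosh_sub_atBot _ hM)

end CaseSix

/-- Case 6 (combination of p₁- and p₄-components), regime p₁ > p₄:
explicit solution and convergence to the fixed points. -/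
theorem stmt_4 (p₁ p₄ ρ : ℝ) (hp : p₁ > p₄) (hp₄ : p₄ > 0) (hρ : 0 < ρ)
    (a : ℝ) (ha : a = p₄ / p₁) (D R I : ℝ → ℝ)
    (hD : ∀ τ, HasDerivAt D (2 * p₁ * I τ * D τ) τ)
    (hR : ∀ τ, HasDerivAt R (2 * p₁ * I τ * R τ - 2 * p₄ * ρ * I τ) τ)
    (hI : ∀ τ, HasDerivAt I (-(2 * p₁ * (D τ ^ 2 + R τ ^ 2)) + 2 * p₄ * ρ * R τ) τ)
    (hsphere : D 0 ^ 2 + R 0 ^ 2 + I 0 ^ 2 = ρ ^ 2)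
    (hne₁ : (D 0, R 0, I 0) ≠ (0, a * ρ, ρ * Real.sqrt (1 - a ^ 2)))
    (hne₂ : (D 0, R 0, I 0) ≠ (0, a * ρ, -(ρ * Real.sqrt (1 - a ^ 2))))
    (M : ℝ) (hM : M = Real.sqrt ((a * ρ - R 0) ^ 2 + (1 - a ^ 2) * D 0 ^ 2)) :
    (∃ τ₀ : ℝ, τ₀ * I 0 ≥ 0 ∧
      (1 - a ^ 2) * ρ / (M * Real.cosh τ₀ - a * (a * ρ - R 0)) = 1 ∧
      ∀ τ : ℝ,
        D τ = (1 - a ^ 2) * ρ * D 0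
                / (M * Real.cosh (2 * p₁ * ρ * Real.sqrt (1 - a ^ 2) * τ - τ₀)
                    - a * (a * ρ - R 0)) ∧
        R τ = a * ρ + (1 - a ^ 2) * ρ * (R 0 - a * ρ)
                / (M * Real.cosh (2 * p₁ * ρ * Real.sqrt (1 - a ^ 2) * τ - τ₀)
                    - a * (a * ρ - R 0)) ∧
        I τ = -(ρ * Real.sqrt (1 - a ^ 2) * M
                  * Real.sinh (2 * p₁ * ρ * Real.sqrt (1 - a ^ 2) * τ - τ₀))
                / (M * Real.cosh (2 * p₁ * ρ * Real.sqrt (1 - a ^ 2) * τ - τ₀)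
                    - a * (a * ρ - R 0))) ∧
    Tendsto (fun τ => (D τ, R τ, I τ)) atTop
      (nhds (0, a * ρ, -(ρ * Real.sqrt (1 - a ^ 2)))) ∧
    Tendsto (fun τ => (D τ, R τ, I τ)) atBot
      (nhds (0, a * ρ, ρ * Real.sqrt (1 - a ^ 2))) := by
  have hp₁ : 0 < p₁ := hp₄.trans hp
  have ha₀ : 0 < a := ha ▸ div_pos hp₄ hp₁
  have ha₁ : a < 1 := ha ▸ (div_lt_one hp₁).2 hp
  have hb : 0 < 1 - a ^ 2 := by nlinarith
  set s := √(1 - a ^ 2)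
  have hs : s ^ 2 = 1 - a ^ 2 := sq_sqrt hb.le
  have hs₀ : 0 < s := sqrt_pos.2 hb
  have hM₀ : 0 < M :=
    hM ▸ sqrt_pos.2 (radicand_pos_of_ne_fixedPoints hb hs hsphere hne₁ hne₂)
  have hM2 : M ^ 2 = (a * ρ - R 0) ^ 2 + (1 - a ^ 2) * D 0 ^ 2 := hM ▸ sq_sqrt (by positivity)
  have hΦ (u : ℝ) : 0 < M * cosh u - a * (a * ρ - R 0) :=
    mul_cosh_sub_mul_pos hM₀ ha₀.le ha₁ (hM ▸ abs_le_sqrt (by nlinarith)) u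
  obtain ⟨τ₀, hcosh, hsinh⟩ :
      ∃ τ₀, M * cosh τ₀ = ρ - a * R 0 ∧ M * sinh τ₀ = s * I 0 :=
    exists_mul_cosh_eq_and_mul_sinh_eq hM₀ (by nlinarith)
      (by linear_combination -hM2 - (1 - a ^ 2) * hsphere - I 0 ^ 2 * hs)
  have hΦ₀ : M * cosh τ₀ - a * (a * ρ - R 0) = (1 - a ^ 2) * ρ := by rw [hcosh]; ring
  have hsol : (fun τ => (D τ, R τ, I τ)) = caseSixOrbit p₁ ρ a s M τ₀ (D 0) (R 0) :=
    IsCaseSixSolution.eq_of_eq_zero (fun τ => ⟨hD τ, hR τ, hI τ⟩)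
      (isCaseSixSolution_caseSixOrbit (by rw [ha]; field_simp) hs hM2 fun u => (hΦ u).ne')
      (caseSixOrbit_zero hs hs₀.ne' hρ.ne' hΦ₀ hsinh).symm
  have hω : 0 < 2 * p₁ * ρ * s := by positivity
  refine ⟨⟨τ₀, ?_, by rw [hΦ₀, div_self (by positivity)], fun τ => ?_⟩,
    hsol ▸ tendsto_caseSixOrbit_atTop hM₀ hω, hsol ▸ tendsto_caseSixOrbit_atBot hM₀ hω⟩
  · have h : s * (τ₀ * I 0) = M * (τ₀ * sinh τ₀) := by linear_combination -τ₀ * hsinh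
    exact (mul_nonneg_iff_of_pos_left hs₀).1 (h ▸ mul_nonneg hM₀.le (mul_sinh_nonneg τ₀))
  · simpa only [caseSixOrbit, Prod.mk.injEq] using congrFun hsol τ
end

section
/- Let p₃ > 0, p₄ ≠ 0, ρ > 0, and let D, R, I : ℝ → ℝ be differentiable functions satisfying D' = 0, R' = -4p₃·D·I - 2p₄ρ·I, I' = 4p₃·D·R + 2p₄ρ·R on ℝ, with D(0)² + R(0)² + I(0)² = ρ². Then for all τ ∈ ℝ: D(τ) = D(0), R(τ) = R(0)·cos(2(2p₃·D(0) + p₄ρ)·τ) - I(0)·sin(2(2p₃·D(0) + p₄ρ)·τ), and I(τ) = R(0)·sin(2(2p₃·D(0) + p₄ρ)·τ) + I(0)·cos(2(2p₃·D(0) + p₄ρ)·τ). -/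
/-!
Since `D' = 0`, `D` is constant, and then `(R, I)` solves the linear rotation system
`R' = -ω I`, `I' = ω R` with `ω = 2 (2 p₃ D(0) + p₄ ρ)`. Rotating `(R(t), I(t))` back by the angle
`ω t` gives a curve with zero derivative, so it stays at `(R(0), I(0))`.
-/

open Real

theorem is_const_of_hasDerivAt_zero {𝕜 G : Type*} [RCLike 𝕜] [NormedAddCommGroup G]
    [NormedSpace 𝕜 G] {f : 𝕜 → G} (hf : ∀ x, HasDerivAt f 0 x) (x y : 𝕜) : f x = f y :=
  is_const_of_deriv_eq_zero (fun z => (hf z).differentiableAt) (fun z => (hf z).deriv) x y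

section Rotation

variable {ω : ℝ} {x y : ℝ → ℝ}

theorem rotateBack_fst_eq (hx : ∀ t, HasDerivAt x (-ω * y t) t)
    (hy : ∀ t, HasDerivAt y (ω * x t) t) (t : ℝ) :
    x t * cos (ω * t) + y t * sin (ω * t) = x 0 := by
  have hderiv : ∀ s, HasDerivAt (fun s => x s * cos (ω * s) + y s * sin (ω * s)) 0 s := by
    intro s
    have hθ : HasDerivAt (fun s => ω * s) ω s := by simpa using (hasDerivAt_id s).const_mul ω
    exact (((hx s).mul hθ.cos).add ((hy s).mul hθ.sin)).congr_deriv (by ring)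
  simpa using is_const_of_hasDerivAt_zero hderiv t 0

theorem rotateBack_snd_eq (hx : ∀ t, HasDerivAt x (-ω * y t) t)
    (hy : ∀ t, HasDerivAt y (ω * x t) t) (t : ℝ) :
    y t * cos (ω * t) - x t * sin (ω * t) = y 0 := by
  have hderiv : ∀ s, HasDerivAt (fun s => y s * cos (ω * s) - x s * sin (ω * s)) 0 s := by
    intro s
    have hθ : HasDerivAt (fun s => ω * s) ω s := by simpa using (hasDerivAt_id s).const_mul ω
    exact (((hy s).mul hθ.cos).sub ((hx s).mul hθ.sin)).congr_deriv (by ring)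
  simpa using is_const_of_hasDerivAt_zero hderiv t 0

theorem eq_rotation_of_hasDerivAt (hx : ∀ t, HasDerivAt x (-ω * y t) t)
    (hy : ∀ t, HasDerivAt y (ω * x t) t) (t : ℝ) :
    x t = x 0 * cos (ω * t) - y 0 * sin (ω * t) ∧
      y t = x 0 * sin (ω * t) + y 0 * cos (ω * t) := by
  have hfst := rotateBack_fst_eq hx hy t
  have hsnd := rotateBack_snd_eq hx hy t
  have hpyth := sin_sq_add_cos_sq (ω * t)
  constructor
  · linear_combination cos (ω * t) * hfst - sin (ω * t) * hsnd - x t * hpyth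
  · linear_combination sin (ω * t) * hfst + cos (ω * t) * hsnd - y t * hpyth

end Rotation

theorem stmt_7_general (p₃ p₄ ρ : ℝ)
    (D R I : ℝ → ℝ)
    (hD : ∀ τ, HasDerivAt D 0 τ)
    (hR : ∀ τ, HasDerivAt R (-(4 * p₃ * D τ * I τ) - 2 * p₄ * ρ * I τ) τ)
    (hI : ∀ τ, HasDerivAt I (4 * p₃ * D τ * R τ + 2 * p₄ * ρ * R τ) τ) :
    ∀ τ : ℝ,
      D τ = D 0 ∧
      R τ = R 0 * Real.cos (2 * (2 * p₃ * D 0 + p₄ * ρ) * τ)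
              - I 0 * Real.sin (2 * (2 * p₃ * D 0 + p₄ * ρ) * τ) ∧
      I τ = R 0 * Real.sin (2 * (2 * p₃ * D 0 + p₄ * ρ) * τ)
              + I 0 * Real.cos (2 * (2 * p₃ * D 0 + p₄ * ρ) * τ) := by
  have hDconst : ∀ τ, D τ = D 0 := fun τ => is_const_of_hasDerivAt_zero hD τ 0
  set ω := 2 * (2 * p₃ * D 0 + p₄ * ρ)
  have hR' : ∀ τ, HasDerivAt R (-ω * I τ) τ := fun τ => by
    convert hR τ using 1
    rw [hDconst τ]
    ring
  have hI' : ∀ τ, HasDerivAt I (ω * R τ) τ := fun τ => by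
    convert hI τ using 1
    rw [hDconst τ]
    ring
  exact fun τ => ⟨hDconst τ, eq_rotation_of_hasDerivAt hR' hI' τ⟩

/-- Case 12 (p₂ = p₃ > 0, p₄ ≠ 0, p₁ = p₅ = 0) of the quadratic system: explicit solution. -/
theorem stmt_7 (p₃ p₄ ρ : ℝ) (hp₃ : 0 < p₃) (hp₄ : p₄ ≠ 0) (hρ : 0 < ρ)
    (D R I : ℝ → ℝ)
    (hD : ∀ τ, HasDerivAt D 0 τ)
    (hR : ∀ τ, HasDerivAt R (-(4 * p₃ * D τ * I τ) - 2 * p₄ * ρ * I τ) τ)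
    (hI : ∀ τ, HasDerivAt I (4 * p₃ * D τ * R τ + 2 * p₄ * ρ * R τ) τ)
    (hsphere : D 0 ^ 2 + R 0 ^ 2 + I 0 ^ 2 = ρ ^ 2) :
    ∀ τ : ℝ,
      D τ = D 0 ∧
      R τ = R 0 * Real.cos (2 * (2 * p₃ * D 0 + p₄ * ρ) * τ)
              - I 0 * Real.sin (2 * (2 * p₃ * D 0 + p₄ * ρ) * τ) ∧
      I τ = R 0 * Real.sin (2 * (2 * p₃ * D 0 + p₄ * ρ) * τ)
              + I 0 * Real.cos (2 * (2 * p₃ * D 0 + p₄ * ρ) * τ) :=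
  stmt_7_general p₃ p₄ ρ D R I hD hR hI
end

section
/- Let p₃ > 0, p₅ > 0, ρ > 0, and let D, R, I : ℝ → ℝ be differentiable functions satisfying D' = -4p₃·R·I + 2p₅ρ·I, R' = 0, I' = 4p₃·D·R - 2p₅ρ·D on ℝ, with D(0)² + R(0)² + I(0)² = ρ². Then for all τ ∈ ℝ: D(τ) = D(0)·cos(2(2p₃·R(0) - p₅ρ)·τ) - I(0)·sin(2(2p₃·R(0) - p₅ρ)·τ), R(τ) = R(0), and I(τ) = D(0)·sin(2(2p₃·R(0) - p₅ρ)·τ) + I(0)·cos(2(2p₃·R(0) - p₅ρ)·τ). -/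
/-!
Since `R' = 0`, `R` is the constant `R 0`, and the remaining equations become the linear
rotation system `D' = -ω I`, `I' = ω D` with `ω = 2 (2 p₃ R 0 - p₅ ρ)`. In complex form
`z = D + I i` satisfies `z' = i ω z`, so `z t = z 0 · exp (i ω t)`; its real and imaginary
parts are the stated formulas.
-/

open Complex in
theorem eq_mul_cexp_of_hasDerivAt {z : ℝ → ℂ} {c : ℂ} (hz : ∀ t, HasDerivAt z (c * z t) t)
    (t : ℝ) : z t = z 0 * exp (c * t) := by
  have hexp : ∀ s : ℝ, HasDerivAt (fun s : ℝ => exp (-(c * s))) (exp (-(c * s)) * -c) s := by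
    intro s
    simpa using ((hasDerivAt_id (s : ℂ)).const_mul c).neg.cexp.comp_ofReal
  have hconst : ∀ s, HasDerivAt (fun s => z s * exp (-(c * s))) 0 s := fun s =>
    ((hz s).mul (hexp s)).congr_deriv (by ring)
  have h := is_const_of_deriv_eq_zero (fun s => (hconst s).differentiableAt)
    (fun s => (hconst s).deriv) t 0
  simp only [ofReal_zero, mul_zero, neg_zero, exp_zero, mul_one] at h
  rw [← h, mul_assoc, ← exp_add, neg_add_cancel, exp_zero, mul_one]

theorem rotation_of_hasDerivAt {x y : ℝ → ℝ} {ω : ℝ}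
    (hx : ∀ t, HasDerivAt x (-(ω * y t)) t) (hy : ∀ t, HasDerivAt y (ω * x t) t) (t : ℝ) :
    x t = x 0 * Real.cos (ω * t) - y 0 * Real.sin (ω * t) ∧
      y t = x 0 * Real.sin (ω * t) + y 0 * Real.cos (ω * t) := by
  have hz : ∀ t, HasDerivAt (fun t => (x t : ℂ) + y t * Complex.I)
      (ω * Complex.I * (x t + y t * Complex.I)) t := fun t =>
    ((hx t).ofReal_comp.add ((hy t).ofReal_comp.mul_const Complex.I)).congr_deriv
      (by push_cast; ring_nf; rw [Complex.I_sq]; ring)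
  have h := eq_mul_cexp_of_hasDerivAt hz t
  rw [show (ω : ℂ) * Complex.I * t = (ω * t : ℝ) * Complex.I by push_cast; ring,
    Complex.exp_mul_I] at h
  generalize ω * t = θ at h ⊢
  constructor
  · simpa [Complex.cos_ofReal_re, Complex.sin_ofReal_re] using congrArg Complex.re h
  · simpa [Complex.cos_ofReal_re, Complex.sin_ofReal_re, add_comm] using congrArg Complex.im h

theorem stmt_8_general (p₃ p₅ ρ : ℝ)
    (D R I : ℝ → ℝ)
    (hD : ∀ τ, HasDerivAt D (-(4 * p₃ * R τ * I τ) + 2 * p₅ * ρ * I τ) τ)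
    (hR : ∀ τ, HasDerivAt R 0 τ)
    (hI : ∀ τ, HasDerivAt I (4 * p₃ * D τ * R τ - 2 * p₅ * ρ * D τ) τ) :
    ∀ τ : ℝ,
      D τ = D 0 * Real.cos (2 * (2 * p₃ * R 0 - p₅ * ρ) * τ)
              - I 0 * Real.sin (2 * (2 * p₃ * R 0 - p₅ * ρ) * τ) ∧
      R τ = R 0 ∧
      I τ = D 0 * Real.sin (2 * (2 * p₃ * R 0 - p₅ * ρ) * τ)
              + I 0 * Real.cos (2 * (2 * p₃ * R 0 - p₅ * ρ) * τ) := by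
  have hRconst : ∀ τ, R τ = R 0 := fun τ =>
    is_const_of_deriv_eq_zero (fun x => (hR x).differentiableAt) (fun x => (hR x).deriv) τ 0
  have hD' : ∀ τ, HasDerivAt D (-(2 * (2 * p₃ * R 0 - p₅ * ρ) * I τ)) τ := fun τ =>
    (hD τ).congr_deriv (by rw [hRconst τ]; ring)
  have hI' : ∀ τ, HasDerivAt I (2 * (2 * p₃ * R 0 - p₅ * ρ) * D τ) τ := fun τ =>
    (hI τ).congr_deriv (by rw [hRconst τ]; ring)
  intro τ
  obtain ⟨hDτ, hIτ⟩ := rotation_of_hasDerivAt hD' hI' τ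
  exact ⟨hDτ, hRconst τ, hIτ⟩

/-- Case 13 (p₂ = -p₃ < 0, p₅ > 0, p₁ = p₄ = 0) of the quadratic system: explicit solution. -/
theorem stmt_8 (p₃ p₅ ρ : ℝ) (hp₃ : 0 < p₃) (hp₅ : 0 < p₅) (hρ : 0 < ρ)
    (D R I : ℝ → ℝ)
    (hD : ∀ τ, HasDerivAt D (-(4 * p₃ * R τ * I τ) + 2 * p₅ * ρ * I τ) τ)
    (hR : ∀ τ, HasDerivAt R 0 τ)
    (hI : ∀ τ, HasDerivAt I (4 * p₃ * D τ * R τ - 2 * p₅ * ρ * D τ) τ)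
    (hsphere : D 0 ^ 2 + R 0 ^ 2 + I 0 ^ 2 = ρ ^ 2) :
    ∀ τ : ℝ,
      D τ = D 0 * Real.cos (2 * (2 * p₃ * R 0 - p₅ * ρ) * τ)
              - I 0 * Real.sin (2 * (2 * p₃ * R 0 - p₅ * ρ) * τ) ∧
      R τ = R 0 ∧
      I τ = D 0 * Real.sin (2 * (2 * p₃ * R 0 - p₅ * ρ) * τ)
              + I 0 * Real.cos (2 * (2 * p₃ * R 0 - p₅ * ρ) * τ) :=
  stmt_8_general p₃ p₅ ρ D R I hD hR hI
end

section
/- Let p₃ > 0 and p₁ = 3p₃, and let D, R, I : ℝ → ℝ be differentiable functions satisfying D' = 2I·(p₁D - p₃R), R' = 2I·(p₁R - p₃D), I' = -2p₁(D² + R²) + 4p₃·D·R on ℝ. Set ρ := √(D(0)² + R(0)² + I(0)²) and assume (D(0),R(0),I(0)) ≠ (0,0,ρ) and ≠ (0,0,-ρ). Set W := √(8ρ²(D(0)-R(0))² + (D(0)+R(0))⁴) and τ₀ := -(sign I(0))·arcosh((4ρ² - (D(0)+R(0))²)/W). Then for all τ ∈ ℝ: D(τ) = ((D(0)+R(0))/2)·2ρ/(W·cosh(8p₃ρτ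 + τ₀) + (D(0)+R(0))²)^{1/2} + ((D(0)-R(0))/2)·4ρ²/(W·cosh(8p₃ρτ + τ₀) + (D(0)+R(0))²), R(τ) = ((D(0)+R(0))/2)·2ρ/(W·cosh(8p₃ρτ + τ₀) + (D(0)+R(0))²)^{1/2} - ((D(0)-R(0))/2)·4ρ²/(W·cosh(8p₃ρτ + τ₀) + (D(0)+R(0))²), and I(τ) = -ρ·W·sinh(8p₃ρτ + τ₀)/(W·cosh(8p₃ρτ + τ₀) + (D(0)+R(0))²). -/
/-!
The right-hand side is polynomial, hence locally Lipschitz, so a global solution is determined by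
its value at `0`. The explicit triple is checked by direct differentiation to solve the system
(using `W² = 8ρ²(D₀ - R₀)² + (D₀ + R₀)⁴` and `cosh² - sinh² = 1`), and the phase `τ₀` is chosen
so that `W cosh τ₀ = 4ρ² - (D₀ + R₀)²` and `W sinh τ₀ = -4ρ I₀`, which makes the denominator
`4ρ²` at `τ = 0` and the triple start at `(D₀, R₀, I₀)`.
-/

noncomputable def arcosh (x : ℝ) : ℝ := Real.log (x + Real.sqrt (x ^ 2 - 1))

theorem arcosh_eq_real_arcosh : arcosh = Real.arcosh := rfl

theorem Real.sign_mul_abs (x : ℝ) : Real.sign x * |x| = x := by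
  rcases lt_trichotomy x 0 with h | rfl | h
  · simp [Real.sign_of_neg h, abs_of_neg h]
  · simp
  · simp [Real.sign_of_pos h, abs_of_pos h]

theorem Real.sinh_sign_mul (a y : ℝ) :
    Real.sinh (Real.sign a * y) = Real.sign a * Real.sinh y := by
  rcases Real.sign_apply_eq a with h | h | h <;> simp [h]

/-- On a time window around `t`, `v` is Lipschitz on the compact set swept by both solutions. -/
theorem LocallyLipschitz.eq_of_hasDerivAt {E : Type*} [NormedAddCommGroup E] [NormedSpace ℝ E]
    {v : E → E} (hv : LocallyLipschitz v) {f g : ℝ → E}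
    (hf : ∀ t, HasDerivAt f (v (f t)) t) (hg : ∀ t, HasDerivAt g (v (g t)) t)
    (h₀ : f 0 = g 0) : f = g := by
  funext t
  set T := |t| + 1
  have hT : (0 : ℝ) ∈ Set.Ioo (-T) T := by constructor <;> linarith [abs_nonneg t]
  have hf_cont : ContinuousOn f (Set.Icc (-T) T) := HasDerivAt.continuousOn fun t _ ↦ hf t
  have hg_cont : ContinuousOn g (Set.Icc (-T) T) := HasDerivAt.continuousOn fun t _ ↦ hg t
  set s := f '' Set.Icc (-T) T ∪ g '' Set.Icc (-T) T
  have hs : IsCompact s := (isCompact_Icc.image_of_continuousOn hf_cont).union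
    (isCompact_Icc.image_of_continuousOn hg_cont)
  obtain ⟨K, hK⟩ := hv.locallyLipschitzOn.exists_lipschitzOnWith_of_compact hs
  refine ODE_solution_unique_of_mem_Icc (v := fun _ ↦ v) (s := fun _ ↦ s) (fun _ _ ↦ hK) hT
    hf_cont (fun t _ ↦ hf t) (fun t ht ↦ .inl ⟨t, Set.Ioo_subset_Icc_self ht, rfl⟩)
    hg_cont (fun t _ ↦ hg t) (fun t ht ↦ .inr ⟨t, Set.Ioo_subset_Icc_self ht, rfl⟩) h₀ ?_
  constructor <;> linarith [neg_abs_le t, le_abs_self t]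

def case11Field (p₁ p₃ : ℝ) (x : ℝ × ℝ × ℝ) : ℝ × ℝ × ℝ :=
  (2 * x.2.2 * (p₁ * x.1 - p₃ * x.2.1), 2 * x.2.2 * (p₁ * x.2.1 - p₃ * x.1),
    -(2 * p₁ * (x.1 ^ 2 + x.2.1 ^ 2)) + 4 * p₃ * x.1 * x.2.1)

theorem contDiff_case11Field (p₁ p₃ : ℝ) : ContDiff ℝ 1 (case11Field p₁ p₃) := by
  unfold case11Field
  fun_prop

noncomputable def case11Denom (p₃ ρ W τ₀ u τ : ℝ) : ℝ :=
  W * Real.cosh (8 * p₃ * ρ * τ + τ₀) + u ^ 2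

/-- The explicit solution; `u` and `v` stand for the initial values of `D + R` and `D - R`. -/
noncomputable def case11Sol (p₃ ρ W τ₀ u v τ : ℝ) : ℝ × ℝ × ℝ :=
  (u / 2 * (2 * ρ / √(case11Denom p₃ ρ W τ₀ u τ)) + v / 2 * (4 * ρ ^ 2 / case11Denom p₃ ρ W τ₀ u τ),
    u / 2 * (2 * ρ / √(case11Denom p₃ ρ W τ₀ u τ)) - v / 2 * (4 * ρ ^ 2 / case11Denom p₃ ρ W τ₀ u τ),
    -(ρ * W * Real.sinh (8 * p₃ * ρ * τ + τ₀)) / case11Denom p₃ ρ W τ₀ u τ)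

section

variable {p₃ ρ W τ₀ u v : ℝ}

theorem case11Denom_pos (hW : 0 < W) (τ : ℝ) : 0 < case11Denom p₃ ρ W τ₀ u τ := by
  unfold case11Denom
  nlinarith [Real.one_le_cosh (8 * p₃ * ρ * τ + τ₀), sq_nonneg u]

theorem hasDerivAt_case11Denom (τ : ℝ) :
    HasDerivAt (case11Denom p₃ ρ W τ₀ u)
      (8 * p₃ * ρ * W * Real.sinh (8 * p₃ * ρ * τ + τ₀)) τ := by
  have hθ : HasDerivAt (fun τ : ℝ ↦ 8 * p₃ * ρ * τ + τ₀) (8 * p₃ * ρ) τ := by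
    simpa using ((hasDerivAt_id τ).const_mul (8 * p₃ * ρ)).add_const τ₀
  exact ((hθ.cosh.const_mul W).add_const (u ^ 2)).congr_deriv (by ring)

theorem hasDerivAt_case11Sol (hW : 0 < W) (hWsq : W ^ 2 = 8 * ρ ^ 2 * v ^ 2 + u ^ 4) (τ : ℝ) :
    HasDerivAt (case11Sol p₃ ρ W τ₀ u v)
      (case11Field (3 * p₃) p₃ (case11Sol p₃ ρ W τ₀ u v τ)) τ := by
  have hF := hasDerivAt_case11Denom (p₃ := p₃) (ρ := ρ) (W := W) (τ₀ := τ₀) (u := u) τ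
  have hF_pos : 0 < case11Denom p₃ ρ W τ₀ u τ := case11Denom_pos hW τ
  have hS_pos := Real.sqrt_pos.2 hF_pos
  have hSF := Real.sq_sqrt hF_pos.le
  have hθ : HasDerivAt (fun τ : ℝ ↦ 8 * p₃ * ρ * τ + τ₀) (8 * p₃ * ρ) τ := by
    simpa using ((hasDerivAt_id τ).const_mul (8 * p₃ * ρ)).add_const τ₀
  have hA := ((hasDerivAt_const τ (2 * ρ)).div (hF.sqrt hF_pos.ne') hS_pos.ne').const_mul (u / 2)
  have hB := ((hasDerivAt_const τ (4 * ρ ^ 2)).div hF hF_pos.ne').const_mul (v / 2)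
  have hI := (hθ.sinh.const_mul (ρ * W)).neg.div hF hF_pos.ne'
  convert (hA.add hB).prodMk ((hA.sub hB).prodMk hI) using 1
  · rfl
  simp only [case11Field, case11Sol, Prod.mk.injEq, Pi.neg_apply]
  generalize √(case11Denom p₃ ρ W τ₀ u τ) = S at hSF hS_pos ⊢
  refine ⟨?_, ?_, ?_⟩
  · rw [← hSF]; field_simp; ring
  · rw [← hSF]; field_simp; ring
  · have hcs := Real.cosh_sq (8 * p₃ * ρ * τ + τ₀)
    unfold case11Denom at hSF ⊢
    generalize Real.cosh (8 * p₃ * ρ * τ + τ₀) = c at hcs hSF ⊢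
    generalize Real.sinh (8 * p₃ * ρ * τ + τ₀) = s at hcs hSF ⊢
    rw [← hSF]
    field_simp
    linear_combination (-32 * p₃ * ρ ^ 2) * ((u ^ 2 - W * c) * hSF - W ^ 2 * hcs - hWsq)

end

theorem case11Sol_zero {p₃ ρ W τ₀ d r i : ℝ} (hρ : 0 < ρ)
    (hc : W * Real.cosh τ₀ = 4 * ρ ^ 2 - (d + r) ^ 2) (hs : W * Real.sinh τ₀ = -(4 * ρ * i)) :
    case11Sol p₃ ρ W τ₀ (d + r) (d - r) 0 = (d, r, i) := by
  have hF : case11Denom p₃ ρ W τ₀ (d + r) 0 = (2 * ρ) ^ 2 := by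
    rw [case11Denom, mul_zero, zero_add, hc]
    ring
  have hθ : 8 * p₃ * ρ * 0 + τ₀ = τ₀ := by ring
  simp only [case11Sol, hF, Real.sqrt_sq (by positivity : 0 ≤ 2 * ρ), hθ, mul_assoc ρ W, hs,
    Prod.mk.injEq]
  refine ⟨?_, ?_, ?_⟩ <;> field_simp <;> ring

theorem case11_initial_pos {d r i ρ : ℝ} (hρ : ρ = √(d ^ 2 + r ^ 2 + i ^ 2))
    (h₁ : (d, r, i) ≠ (0, 0, ρ)) (h₂ : (d, r, i) ≠ (0, 0, -ρ)) :
    0 < ρ ∧ 0 < 8 * ρ ^ 2 * (d - r) ^ 2 + (d + r) ^ 4 := by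
  have hdr : d ≠ 0 ∨ r ≠ 0 := by
    by_contra! h
    obtain ⟨rfl, rfl⟩ := h
    have hρi : ρ = |i| := by rw [hρ]; simp [Real.sqrt_sq_eq_abs]
    rcases abs_choice i with h | h
    · exact h₁ (by rw [hρi, h])
    · exact h₂ (by rw [hρi, h, neg_neg])
  have hpos : 0 < d ^ 2 + r ^ 2 := by
    rcases hdr with h | h <;> positivity
  have hρ_pos : 0 < ρ := by
    rw [hρ]; apply Real.sqrt_pos.2; nlinarith [sq_nonneg i]
  refine ⟨hρ_pos, ?_⟩
  by_cases hu : d + r = 0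
  · have hv : d - r ≠ 0 := by
      intro hv; rcases hdr with h | h <;> apply h <;> linarith
    positivity
  · positivity

theorem case11_phase_cosh_sinh {d r i ρ W : ℝ} (hρ : ρ ^ 2 = d ^ 2 + r ^ 2 + i ^ 2)
    (hρ0 : 0 ≤ ρ) (hW : W ^ 2 = 8 * ρ ^ 2 * (d - r) ^ 2 + (d + r) ^ 4) (hW0 : 0 < W) :
    W * Real.cosh (-(Real.sign i) * arcosh ((4 * ρ ^ 2 - (d + r) ^ 2) / W)) =
        4 * ρ ^ 2 - (d + r) ^ 2 ∧
      W * Real.sinh (-(Real.sign i) * arcosh ((4 * ρ ^ 2 - (d + r) ^ 2) / W)) = -(4 * ρ * i) := by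
  set A := 4 * ρ ^ 2 - (d + r) ^ 2
  have hA : A ^ 2 = W ^ 2 + (4 * ρ * i) ^ 2 := by
    simp only [A]; linear_combination -hW + 16 * ρ ^ 2 * hρ
  have hA0 : 0 ≤ A := by nlinarith [sq_nonneg (d - r), sq_nonneg i]
  have hx : 1 ≤ A / W := by
    rw [le_div_iff₀ hW0, one_mul]
    nlinarith [sq_nonneg (4 * ρ * i)]
  have hsqrt : √((A / W) ^ 2 - 1) = 4 * ρ * |i| / W := by
    rw [← Real.sqrt_sq (by positivity : 0 ≤ 4 * ρ * |i| / W)]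
    congr 1
    field_simp
    rw [sq_abs]
    linear_combination hA
  have hsinh : W * Real.sinh (-(Real.sign i) * arcosh (A / W)) = -(4 * ρ * i) := by
    rw [neg_mul, Real.sinh_neg, Real.sinh_sign_mul, arcosh_eq_real_arcosh, Real.sinh_arcosh hx,
      hsqrt]
    calc W * -(Real.sign i * (4 * ρ * |i| / W)) = -(4 * ρ * (Real.sign i * |i|)) := by
          field_simp
      _ = -(4 * ρ * i) := by rw [Real.sign_mul_abs]
  refine ⟨(sq_eq_sq₀ (mul_pos hW0 (Real.cosh_pos _)).le hA0).1 ?_, hsinh⟩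
  set t := -(Real.sign i) * arcosh (A / W)
  linear_combination W ^ 2 * Real.cosh_sq t + (W * Real.sinh t - 4 * ρ * i) * hsinh - hA

theorem stmt_10_general (p₁ p₃ : ℝ) (hp₁ : p₁ = 3 * p₃) (D R I : ℝ → ℝ)
    (hD : ∀ τ, HasDerivAt D (2 * I τ * (p₁ * D τ - p₃ * R τ)) τ)
    (hR : ∀ τ, HasDerivAt R (2 * I τ * (p₁ * R τ - p₃ * D τ)) τ)
    (hI : ∀ τ, HasDerivAt I (-(2 * p₁ * (D τ ^ 2 + R τ ^ 2)) + 4 * p₃ * D τ * R τ) τ)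
    (ρ : ℝ) (hρ : ρ = Real.sqrt (D 0 ^ 2 + R 0 ^ 2 + I 0 ^ 2))
    (hne₁ : (D 0, R 0, I 0) ≠ (0, 0, ρ))
    (hne₂ : (D 0, R 0, I 0) ≠ (0, 0, -ρ))
    (W τ₀ : ℝ)
    (hW : W = Real.sqrt (8 * ρ ^ 2 * (D 0 - R 0) ^ 2 + (D 0 + R 0) ^ 4))
    (hτ₀ : τ₀ = -(Real.sign (I 0)) * arcosh ((4 * ρ ^ 2 - (D 0 + R 0) ^ 2) / W)) :
    ∀ τ : ℝ,
      D τ = (D 0 + R 0) / 2 *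
              (2 * ρ / (W * Real.cosh (8 * p₃ * ρ * τ + τ₀) + (D 0 + R 0) ^ 2) ^ ((1:ℝ)/2))
            + (D 0 - R 0) / 2 *
              (4 * ρ ^ 2 / (W * Real.cosh (8 * p₃ * ρ * τ + τ₀) + (D 0 + R 0) ^ 2)) ∧
      R τ = (D 0 + R 0) / 2 *
              (2 * ρ / (W * Real.cosh (8 * p₃ * ρ * τ + τ₀) + (D 0 + R 0) ^ 2) ^ ((1:ℝ)/2))
            - (D 0 - R 0) / 2 *
              (4 * ρ ^ 2 / (W * Real.cosh (8 * p₃ * ρ * τ + τ₀) + (D 0 + R 0) ^ 2)) ∧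
      I τ = -(ρ * W * Real.sinh (8 * p₃ * ρ * τ + τ₀))
              / (W * Real.cosh (8 * p₃ * ρ * τ + τ₀) + (D 0 + R 0) ^ 2) := by
  subst hp₁
  obtain ⟨hρ_pos, hW_sq_pos⟩ := case11_initial_pos hρ hne₁ hne₂
  have hρsq : ρ ^ 2 = D 0 ^ 2 + R 0 ^ 2 + I 0 ^ 2 := by rw [hρ, Real.sq_sqrt (by positivity)]
  have hWsq : W ^ 2 = 8 * ρ ^ 2 * (D 0 - R 0) ^ 2 + (D 0 + R 0) ^ 4 := by
    rw [hW, Real.sq_sqrt hW_sq_pos.le]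
  have hW_pos : 0 < W := hW ▸ Real.sqrt_pos.2 hW_sq_pos
  obtain ⟨hc, hs⟩ := case11_phase_cosh_sinh hρsq hρ_pos.le hWsq hW_pos
  rw [← hτ₀] at hc hs
  have hsol : (fun τ ↦ (D τ, R τ, I τ)) = case11Sol p₃ ρ W τ₀ (D 0 + R 0) (D 0 - R 0) :=
    (contDiff_case11Field (3 * p₃) p₃).locallyLipschitz.eq_of_hasDerivAt
      (fun τ ↦ (hD τ).prodMk ((hR τ).prodMk (hI τ))) (hasDerivAt_case11Sol hW_pos hWsq)
      (case11Sol_zero hρ_pos hc hs).symm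
  intro τ
  simpa [Prod.ext_iff, case11Sol, case11Denom, Real.sqrt_eq_rpow] using congrFun hsol τ

/-- Case 11 (combination of p₁- and p₃-components), case p₁ = 3p₃:
explicit solution. -/
theorem stmt_10 (p₁ p₃ : ℝ) (hp₃ : 0 < p₃) (hp₁ : p₁ = 3 * p₃) (D R I : ℝ → ℝ)
    (hD : ∀ τ, HasDerivAt D (2 * I τ * (p₁ * D τ - p₃ * R τ)) τ)
    (hR : ∀ τ, HasDerivAt R (2 * I τ * (p₁ * R τ - p₃ * D τ)) τ)
    (hI : ∀ τ, HasDerivAt I (-(2 * p₁ * (D τ ^ 2 + R τ ^ 2)) + 4 * p₃ * D τ * R τ) τ)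
    (ρ : ℝ) (hρ : ρ = Real.sqrt (D 0 ^ 2 + R 0 ^ 2 + I 0 ^ 2))
    (hne₁ : (D 0, R 0, I 0) ≠ (0, 0, ρ))
    (hne₂ : (D 0, R 0, I 0) ≠ (0, 0, -ρ))
    (W τ₀ : ℝ)
    (hW : W = Real.sqrt (8 * ρ ^ 2 * (D 0 - R 0) ^ 2 + (D 0 + R 0) ^ 4))
    (hτ₀ : τ₀ = -(Real.sign (I 0)) * arcosh ((4 * ρ ^ 2 - (D 0 + R 0) ^ 2) / W)) :
    ∀ τ : ℝ,
      D τ = (D 0 + R 0) / 2 *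
              (2 * ρ / (W * Real.cosh (8 * p₃ * ρ * τ + τ₀) + (D 0 + R 0) ^ 2) ^ ((1:ℝ)/2))
            + (D 0 - R 0) / 2 *
              (4 * ρ ^ 2 / (W * Real.cosh (8 * p₃ * ρ * τ + τ₀) + (D 0 + R 0) ^ 2)) ∧
      R τ = (D 0 + R 0) / 2 *
              (2 * ρ / (W * Real.cosh (8 * p₃ * ρ * τ + τ₀) + (D 0 + R 0) ^ 2) ^ ((1:ℝ)/2))
            - (D 0 - R 0) / 2 *
              (4 * ρ ^ 2 / (W * Real.cosh (8 * p₃ * ρ * τ + τ₀) + (D 0 + R 0) ^ 2)) ∧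
      I τ = -(ρ * W * Real.sinh (8 * p₃ * ρ * τ + τ₀))
              / (W * Real.cosh (8 * p₃ * ρ * τ + τ₀) + (D 0 + R 0) ^ 2) :=
  stmt_10_general p₁ p₃ hp₁ D R I hD hR hI ρ hρ hne₁ hne₂ W τ₀ hW hτ₀
end

section
/- Let p₁ > 0, p₂ ≠ 0, p₃ > 0 with p₁² + p₂² = p₃², and let Θ := arctan(p₁/(p₂+p₃)) ∈ (0, π/2). Let D, R, I : ℝ → ℝ be differentiable functions satisfying D' = 2I·(p₁D + (p₂-p₃)R), R' = 2I·(-(p₂+p₃)D + p₁R), I' = -2p₁(D² + R²) + 4p₃·D·R on ℝ. Set ρ := √(D(0)² + R(0)² + I(0)²), X := D(0)/(2 sin Θ) + R(0)/(2 cos Θ), Y := -D(0)/(2 sin Θ) + R(0)/(2 cos Θ), and assume |X| < ρ; set r := √(ρ² - X²). Then for all t ∈ ℝ, with E(t) := ((r - I(0))² + Y²)·e^{4p₁rt} + ((r + I(0))² + Y²)·e^{-4p₁rt} - 2I(0)² - 2Y² + 2r²: D(t) = sin Θ · ( X - 4r²Y/E(t) ), R(t) = cos Θ · ( X + 4r²Y/E(t)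 ), and I(t) = -r·( ((r - I(0))² + Y²)·e^{4p₁rt} - ((r + I(0))² + Y²)·e^{-4p₁rt} ) / E(t). -/
/-!
The system conserves `D² + R² + I²`, so every solution stays in a fixed closed ball, on which the
polynomial vector field is Lipschitz; hence a solution is determined by its value at `t = 0`, and
it suffices to check that the explicit formulas solve the system and agree with `(D, R, I)` at `0`.

With `s = sin Θ`, `c = cos Θ`, the angle `Θ` is half the polar angle of `(p₂, p₁)`, so
`2 p₃ s² = p₃ - p₂`, `2 p₃ c² = p₃ + p₂`, `2 p₃ s c = p₁`. Writing `E = A eᵃᵗ + B e⁻ᵃᵗ + C` and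
`F = A eᵃᵗ - B e⁻ᵃᵗ` with `a = 4 p₁ r`, the verification only uses `E' = a F`, `F' = a (E - C)`
and the first integral `E² - F² = 2 C E + 16 r² Y²`, together with the relation
`p₃ C = 4 p₂ X Y` coming from `r² = ρ² - X²`. The denominator `E` is positive since
`eᵃᵗ E` is a sum of two squares that cannot vanish simultaneously.
-/

open Real Set

theorem ODE_solution_unique_of_contDiff_of_isCompact {E : Type*} [NormedAddCommGroup E]
    [NormedSpace ℝ E] {v : E → E} (hv : ContDiff ℝ 1 v) {K : Set E} (hK : IsCompact K)
    (hKc : Convex ℝ K) {f g : ℝ → E} (hf : ∀ t, HasDerivAt f (v (f t)) t ∧ f t ∈ K)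
    (hg : ∀ t, HasDerivAt g (v (g t)) t ∧ g t ∈ K) {t₀ : ℝ} (heq : f t₀ = g t₀) : f = g := by
  obtain ⟨L, hL⟩ := hv.contDiffOn.exists_lipschitzOnWith one_ne_zero hKc hK
  exact ODE_solution_unique_univ (v := fun _ => v) (s := fun _ => K) (fun _ => hL) hf hg heq

def quadField (p₁ p₂ p₃ : ℝ) (x : ℝ × ℝ × ℝ) : ℝ × ℝ × ℝ :=
  (2 * x.2.2 * (p₁ * x.1 + (p₂ - p₃) * x.2.1),
   2 * x.2.2 * (-((p₂ + p₃) * x.1) + p₁ * x.2.1),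
   -(2 * p₁ * (x.1 ^ 2 + x.2.1 ^ 2)) + 4 * p₃ * x.1 * x.2.1)

lemma contDiff_quadField (p₁ p₂ p₃ : ℝ) {n : WithTop ℕ∞} :
    ContDiff ℝ n (quadField p₁ p₂ p₃) := by
  unfold quadField; fun_prop

def IsSolution (p₁ p₂ p₃ : ℝ) (D R I : ℝ → ℝ) : Prop :=
  ∀ t, HasDerivAt D (2 * I t * (p₁ * D t + (p₂ - p₃) * R t)) t ∧
    HasDerivAt R (2 * I t * (-((p₂ + p₃) * D t) + p₁ * R t)) t ∧
    HasDerivAt I (-(2 * p₁ * (D t ^ 2 + R t ^ 2)) + 4 * p₃ * D t * R t) t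

namespace IsSolution

variable {p₁ p₂ p₃ : ℝ} {D R I : ℝ → ℝ}

lemma hasDerivAt_prod (h : IsSolution p₁ p₂ p₃ D R I) (t : ℝ) :
    HasDerivAt (fun t => (D t, R t, I t)) (quadField p₁ p₂ p₃ (D t, R t, I t)) t :=
  (h t).1.prodMk ((h t).2.1.prodMk (h t).2.2)

lemma sum_sq_eq (h : IsSolution p₁ p₂ p₃ D R I) (t : ℝ) :
    D t ^ 2 + R t ^ 2 + I t ^ 2 = D 0 ^ 2 + R 0 ^ 2 + I 0 ^ 2 := by
  have hderiv (t : ℝ) : HasDerivAt (fun t => D t ^ 2 + R t ^ 2 + I t ^ 2) 0 t := by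
    obtain ⟨hD, hR, hI⟩ := h t
    exact (((hD.pow 2).add (hR.pow 2)).add (hI.pow 2)).congr_deriv (by ring)
  exact is_const_of_deriv_eq_zero (fun t => (hderiv t).differentiableAt)
    (fun t => (hderiv t).deriv) t 0

lemma mem_closedBall (h : IsSolution p₁ p₂ p₃ D R I) (t : ℝ) :
    (D t, R t, I t) ∈ Metric.closedBall 0 (√(D 0 ^ 2 + R 0 ^ 2 + I 0 ^ 2)) := by
  have hsum := h.sum_sq_eq t
  simp only [mem_closedBall_zero_iff, Prod.norm_def, Real.norm_eq_abs, sup_le_iff]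
  refine ⟨abs_le_sqrt ?_, abs_le_sqrt ?_, abs_le_sqrt ?_⟩ <;>
    nlinarith [sq_nonneg (D t), sq_nonneg (R t), sq_nonneg (I t)]

theorem unique {D' R' I' : ℝ → ℝ} (h : IsSolution p₁ p₂ p₃ D R I)
    (h' : IsSolution p₁ p₂ p₃ D' R' I') (hD : D 0 = D' 0) (hR : R 0 = R' 0) (hI : I 0 = I' 0) :
    D = D' ∧ R = R' ∧ I = I' := by
  have hball := h'.mem_closedBall
  rw [← hD, ← hR, ← hI] at hball
  have := ODE_solution_unique_of_contDiff_of_isCompact (contDiff_quadField p₁ p₂ p₃)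
    (isCompact_closedBall _ _) (convex_closedBall _ _)
    (fun t => ⟨h.hasDerivAt_prod t, h.mem_closedBall t⟩)
    (fun t => ⟨h'.hasDerivAt_prod t, hball t⟩) (t₀ := 0) (by simp [hD, hR, hI])
  simp only [funext_iff, Prod.mk.injEq] at this
  exact ⟨funext fun t => (this t).1, funext fun t => (this t).2.1, funext fun t => (this t).2.2⟩

end IsSolution

lemma half_angle_arctan {a b c : ℝ} (hbc : 0 < b + c) (h : a ^ 2 + b ^ 2 = c ^ 2) :
    2 * c * sin (arctan (a / (b + c))) ^ 2 = c - b ∧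
    2 * c * cos (arctan (a / (b + c))) ^ 2 = c + b ∧
    2 * c * (sin (arctan (a / (b + c))) * cos (arctan (a / (b + c)))) = a := by
  have hcos : 2 * c * cos (arctan (a / (b + c))) ^ 2 = b + c := by
    rw [cos_sq_arctan]; field_simp; linear_combination -h
  have hxbc : a / (b + c) * (b + c) = a := div_mul_cancel₀ a hbc.ne'
  have hsin (x : ℝ) : sin (arctan x) = x * cos (arctan x) := by rw [sin_arctan, cos_arctan]; ring
  generalize a / (b + c) = x at *
  refine ⟨?_, by linear_combination hcos, ?_⟩
  · have hb : (b + c) * (c - b) = (b + c) * (x ^ 2 * (b + c)) := by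
      linear_combination -h - hxbc * (x * (b + c) + a)
    rw [hsin, mul_pow, mul_left_comm, hcos, mul_left_cancel₀ hbc.ne' hb]
  · rw [hsin]; linear_combination x * hcos + hxbc

section ExpPair

variable (A B C a : ℝ)

lemma hasDerivAt_mul_exp_add_mul_exp_neg (t : ℝ) :
    HasDerivAt (fun t => A * exp (a * t) + B * exp (-(a * t)) + C)
      (a * (A * exp (a * t) - B * exp (-(a * t)))) t := by
  have hlin : HasDerivAt (fun t => a * t) a t := by simpa using (hasDerivAt_id t).const_mul a
  have hneg : HasDerivAt (fun t => -(a * t)) (-a) t := hlin.neg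
  exact (((hlin.exp.const_mul A).add (hneg.exp.const_mul B)).add_const C).congr_deriv (by ring)

lemma hasDerivAt_mul_exp_sub_mul_exp_neg (t : ℝ) :
    HasDerivAt (fun t => A * exp (a * t) - B * exp (-(a * t)))
      (a * (A * exp (a * t) + B * exp (-(a * t)))) t := by
  have hlin : HasDerivAt (fun t => a * t) a t := by simpa using (hasDerivAt_id t).const_mul a
  have hneg : HasDerivAt (fun t => -(a * t)) (-a) t := hlin.neg
  exact ((hlin.exp.const_mul A).sub (hneg.exp.const_mul B)).congr_deriv (by ring)

lemma sq_mul_exp_add_sub_sq_mul_exp_sub (t : ℝ) :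
    (A * exp (a * t) + B * exp (-(a * t)) + C) ^ 2 - (A * exp (a * t) - B * exp (-(a * t))) ^ 2
      = 2 * C * (A * exp (a * t) + B * exp (-(a * t)) + C) + (4 * A * B - C ^ 2) := by
  have h : exp (a * t) * exp (-(a * t)) = 1 := by rw [← exp_add, add_neg_cancel, exp_zero]
  linear_combination 4 * A * B * h

end ExpPair

lemma denominator_pos {r i Y : ℝ} (a t : ℝ) (hr : 0 < r) (hY : Y = 0 → i ^ 2 = r ^ 2) :
    0 < ((r - i) ^ 2 + Y ^ 2) * exp (a * t) + ((r + i) ^ 2 + Y ^ 2) * exp (-(a * t))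
      + (2 * r ^ 2 - 2 * i ^ 2 - 2 * Y ^ 2) := by
  rw [exp_neg]
  have hu := exp_pos (a * t)
  generalize exp (a * t) = u at hu ⊢
  have hsos : u * (((r - i) ^ 2 + Y ^ 2) * u + ((r + i) ^ 2 + Y ^ 2) * u⁻¹
      + (2 * r ^ 2 - 2 * i ^ 2 - 2 * Y ^ 2)) = ((r - i) * u + (r + i)) ^ 2 + Y ^ 2 * (u - 1) ^ 2 := by
    field_simp; ring
  refine pos_of_mul_pos_right (hsos ▸ ?_) hu.le
  by_cases hY0 : Y = 0
  · rcases sq_eq_sq_iff_eq_or_eq_neg.mp (hY hY0) with rfl | rfl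
    · nlinarith
    · have : 0 < 2 * r * u := by positivity
      nlinarith
  · by_cases hu1 : u = 1
    · subst hu1; nlinarith
    · have : 0 < Y ^ 2 * (u - 1) ^ 2 := by have := sub_ne_zero.mpr hu1; positivity
      nlinarith

theorem isSolution_of_pair {p₁ p₂ p₃ s c r X Y C : ℝ} {E F : ℝ → ℝ} (hp₃ : p₃ ≠ 0)
    (hs2 : 2 * p₃ * s ^ 2 = p₃ - p₂) (hc2 : 2 * p₃ * c ^ 2 = p₃ + p₂)
    (hsc : 2 * p₃ * (s * c) = p₁) (hC : p₃ * C = 4 * p₂ * (X * Y))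
    (hE : ∀ t, HasDerivAt E (4 * p₁ * r * F t) t)
    (hF : ∀ t, HasDerivAt F (4 * p₁ * r * (E t - C)) t)
    (hEF : ∀ t, E t ^ 2 - F t ^ 2 = 2 * C * E t + 16 * r ^ 2 * Y ^ 2) (hE₀ : ∀ t, E t ≠ 0) :
    IsSolution p₁ p₂ p₃ (fun t => s * (X - 4 * r ^ 2 * Y / E t))
      (fun t => c * (X + 4 * r ^ 2 * Y / E t)) (fun t => -(r * F t) / E t) := by
  intro t
  have hV := (hasDerivAt_const t (4 * r ^ 2 * Y)).div (hE t) (hE₀ t)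
  have hrF : HasDerivAt (fun t => -(r * F t)) (-(r * (4 * p₁ * r * (E t - C)))) t :=
    ((hF t).const_mul r).neg
  have hinv : E t * (E t)⁻¹ = 1 := mul_inv_cancel₀ (hE₀ t)
  refine ⟨(hV.const_sub X).const_mul s |>.congr_deriv ?_,
    (hV.const_add X).const_mul c |>.congr_deriv ?_,
    hrF.div (hE t) (hE₀ t) |>.congr_deriv ?_⟩
  · linear_combination (2 * (-(r * F t) / E t) * (X + 4 * r ^ 2 * Y / E t)) * (s * hsc - c * hs2)
  · linear_combination (2 * (-(r * F t) / E t) * (X - 4 * r ^ 2 * Y / E t)) * (c * hsc - s * hc2)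
  · apply mul_left_cancel₀ (mul_ne_zero two_ne_zero hp₃)
    linear_combination 2 * p₁ * (X - 4 * r ^ 2 * Y / E t) ^ 2 * hs2
      + 2 * p₁ * (X + 4 * r ^ 2 * Y / E t) ^ 2 * hc2
      - 4 * p₃ * ((X - 4 * r ^ 2 * Y / E t) * (X + 4 * r ^ 2 * Y / E t)) * hsc
      - 8 * p₁ * p₃ * r ^ 2 / E t ^ 2 * hEF t - 8 * p₁ * r ^ 2 / E t * hC
      - 8 * p₁ * p₃ * r ^ 2 * C / E t * hinv

theorem isSolution_exp {p₁ p₂ p₃ s c r X Y i : ℝ} {E : ℝ → ℝ} (hp₃ : p₃ ≠ 0)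
    (hs2 : 2 * p₃ * s ^ 2 = p₃ - p₂) (hc2 : 2 * p₃ * c ^ 2 = p₃ + p₂)
    (hsc : 2 * p₃ * (s * c) = p₁) (hr : 0 < r)
    (hC : p₃ * (2 * r ^ 2 - 2 * i ^ 2 - 2 * Y ^ 2) = 4 * p₂ * (X * Y))
    (hE : ∀ t, E t = ((r - i) ^ 2 + Y ^ 2) * exp (4 * p₁ * r * t)
      + ((r + i) ^ 2 + Y ^ 2) * exp (-(4 * p₁ * r * t)) - 2 * i ^ 2 - 2 * Y ^ 2 + 2 * r ^ 2) :
    IsSolution p₁ p₂ p₃ (fun t => s * (X - 4 * r ^ 2 * Y / E t))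
      (fun t => c * (X + 4 * r ^ 2 * Y / E t))
      (fun t => -(r * (((r - i) ^ 2 + Y ^ 2) * exp (4 * p₁ * r * t)
        - ((r + i) ^ 2 + Y ^ 2) * exp (-(4 * p₁ * r * t)))) / E t) := by
  have hY (h : Y = 0) : i ^ 2 = r ^ 2 := by
    have : p₃ * (r ^ 2 - i ^ 2) = 0 := by rw [h] at hC; linear_combination hC / 2
    linarith [(mul_eq_zero.mp this).resolve_left hp₃]
  set A := (r - i) ^ 2 + Y ^ 2
  set B := (r + i) ^ 2 + Y ^ 2
  set C := 2 * r ^ 2 - 2 * i ^ 2 - 2 * Y ^ 2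
  obtain rfl : E = fun t => A * exp (4 * p₁ * r * t) + B * exp (-(4 * p₁ * r * t)) + C :=
    funext fun t => by rw [hE]; ring
  exact isSolution_of_pair hp₃ hs2 hc2 hsc hC (hasDerivAt_mul_exp_add_mul_exp_neg A B C _)
    (fun t => (hasDerivAt_mul_exp_sub_mul_exp_neg A B _ t).congr_deriv (by ring))
    (fun t => (sq_mul_exp_add_sub_sq_mul_exp_sub A B C _ t).trans (by ring))
    (fun t => (denominator_pos _ t hr hY).ne')

theorem stmt_12_general (p₁ p₂ p₃ : ℝ) (hp₁ : 0 < p₁) (hp₃ : 0 < p₃)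
    (hpyth : p₁ ^ 2 + p₂ ^ 2 = p₃ ^ 2)
    (Θ : ℝ) (hΘ : Θ = Real.arctan (p₁ / (p₂ + p₃)))
    (D R I : ℝ → ℝ)
    (hD : ∀ t, HasDerivAt D (2 * I t * (p₁ * D t + (p₂ - p₃) * R t)) t)
    (hR : ∀ t, HasDerivAt R (2 * I t * (-((p₂ + p₃) * D t) + p₁ * R t)) t)
    (hI : ∀ t, HasDerivAt I (-(2 * p₁ * (D t ^ 2 + R t ^ 2)) + 4 * p₃ * D t * R t) t)
    (ρ X Y r : ℝ)
    (hρ : ρ = Real.sqrt (D 0 ^ 2 + R 0 ^ 2 + I 0 ^ 2))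
    (hX : X = D 0 / (2 * Real.sin Θ) + R 0 / (2 * Real.cos Θ))
    (hY : Y = -(D 0 / (2 * Real.sin Θ)) + R 0 / (2 * Real.cos Θ))
    (hXρ : |X| < ρ)
    (hr : r = Real.sqrt (ρ ^ 2 - X ^ 2))
    (E : ℝ → ℝ)
    (hE : ∀ t, E t = ((r - I 0) ^ 2 + Y ^ 2) * Real.exp (4 * p₁ * r * t)
                      + ((r + I 0) ^ 2 + Y ^ 2) * Real.exp (-(4 * p₁ * r * t))
                      - 2 * I 0 ^ 2 - 2 * Y ^ 2 + 2 * r ^ 2) :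
    ∀ t : ℝ,
      D t = Real.sin Θ * (X - 4 * r ^ 2 * Y / E t) ∧
      R t = Real.cos Θ * (X + 4 * r ^ 2 * Y / E t) ∧
      I t = -(r * (((r - I 0) ^ 2 + Y ^ 2) * Real.exp (4 * p₁ * r * t)
                    - ((r + I 0) ^ 2 + Y ^ 2) * Real.exp (-(4 * p₁ * r * t)))) / E t := by
  obtain ⟨hs2, hc2, hsc⟩ := half_angle_arctan (by nlinarith) hpyth
  rw [← hΘ] at hs2 hc2 hsc
  obtain ⟨hs, hc⟩ : sin Θ ≠ 0 ∧ cos Θ ≠ 0 :=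
    mul_ne_zero_iff.mp fun h => by rw [h, mul_zero] at hsc; linarith
  have hD0 : D 0 = sin Θ * (X - Y) := by rw [hX, hY]; field_simp; ring
  have hR0 : R 0 = cos Θ * (X + Y) := by rw [hX, hY]; field_simp; ring
  have hX2 : X ^ 2 < ρ ^ 2 := by
    simpa only [sq_abs] using pow_lt_pow_left₀ hXρ (abs_nonneg X) two_ne_zero
  have hρ2 : ρ ^ 2 = D 0 ^ 2 + R 0 ^ 2 + I 0 ^ 2 := by rw [hρ]; exact sq_sqrt (by positivity)
  have hr2 : r ^ 2 = ρ ^ 2 - X ^ 2 := by rw [hr]; exact sq_sqrt (by linarith)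
  have hr0 : 0 < r := by rw [hr]; exact sqrt_pos.mpr (by linarith)
  have hC : p₃ * (2 * r ^ 2 - 2 * I 0 ^ 2 - 2 * Y ^ 2) = 4 * p₂ * (X * Y) := by
    rw [hr2, hρ2, hD0, hR0]
    linear_combination (X - Y) ^ 2 * hs2 + (X + Y) ^ 2 * hc2
  have hE0 : E 0 = 4 * r ^ 2 := by rw [hE]; simp only [mul_zero, neg_zero, exp_zero]; ring
  obtain ⟨h1, h2, h3⟩ := IsSolution.unique (fun t => ⟨hD t, hR t, hI t⟩)
    (isSolution_exp hp₃.ne' hs2 hc2 hsc hr0 hC hE)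
    (by simp only [hE0, hD0]; field_simp)
    (by simp only [hE0, hR0]; field_simp)
    (by simp only [hE0, mul_zero, neg_zero, exp_zero]; field_simp; ring)
  exact fun t => ⟨congrFun h1 t, congrFun h2 t, congrFun h3 t⟩

/-- Case 14 (special combination p₁² + p₂² = p₃², p₄ = p₅ = 0) of the quadratic
system, in the regime |X| < ρ: explicit solution. -/
theorem stmt_12 (p₁ p₂ p₃ : ℝ) (hp₁ : 0 < p₁) (hp₂ : p₂ ≠ 0) (hp₃ : 0 < p₃)
    (hpyth : p₁ ^ 2 + p₂ ^ 2 = p₃ ^ 2)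
    (Θ : ℝ) (hΘ : Θ = Real.arctan (p₁ / (p₂ + p₃)))
    (D R I : ℝ → ℝ)
    (hD : ∀ t, HasDerivAt D (2 * I t * (p₁ * D t + (p₂ - p₃) * R t)) t)
    (hR : ∀ t, HasDerivAt R (2 * I t * (-((p₂ + p₃) * D t) + p₁ * R t)) t)
    (hI : ∀ t, HasDerivAt I (-(2 * p₁ * (D t ^ 2 + R t ^ 2)) + 4 * p₃ * D t * R t) t)
    (ρ X Y r : ℝ)
    (hρ : ρ = Real.sqrt (D 0 ^ 2 + R 0 ^ 2 + I 0 ^ 2))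
    (hX : X = D 0 / (2 * Real.sin Θ) + R 0 / (2 * Real.cos Θ))
    (hY : Y = -(D 0 / (2 * Real.sin Θ)) + R 0 / (2 * Real.cos Θ))
    (hXρ : |X| < ρ)
    (hr : r = Real.sqrt (ρ ^ 2 - X ^ 2))
    (E : ℝ → ℝ)
    (hE : ∀ t, E t = ((r - I 0) ^ 2 + Y ^ 2) * Real.exp (4 * p₁ * r * t)
                      + ((r + I 0) ^ 2 + Y ^ 2) * Real.exp (-(4 * p₁ * r * t))
                      - 2 * I 0 ^ 2 - 2 * Y ^ 2 + 2 * r ^ 2) :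
    ∀ t : ℝ,
      D t = Real.sin Θ * (X - 4 * r ^ 2 * Y / E t) ∧
      R t = Real.cos Θ * (X + 4 * r ^ 2 * Y / E t) ∧
      I t = -(r * (((r - I 0) ^ 2 + Y ^ 2) * Real.exp (4 * p₁ * r * t)
                    - ((r + I 0) ^ 2 + Y ^ 2) * Real.exp (-(4 * p₁ * r * t)))) / E t :=
  stmt_12_general p₁ p₂ p₃ hp₁ hp₃ hpyth Θ hΘ D R I hD hR hI ρ X Y r hρ hX hY hXρ hr E hE
end

section
/- Let f, g, h : ℝ → ℝ be differentiable functions satisfying f' = g·h, g' = -f·h, h' = -f on ℝ. Then for all t ∈ ℝ: f(t) = -h'(t) and g(t) = (h(t)² - h(0)²)/2 + g(0); equivalently, the quantity 2g(t) - h(t)² is constant in t. Moreover f(t)² + g(t)² is constant in t. -/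
/-!
Differentiating, `(2g - h²)' = -2fh + 2hf = 0` and `(f² + g²)' = 2fgh - 2gfh = 0`, so both
quantities are constant; the formula for `g` is a rearrangement of the first conservation law,
and `f = -h'` is the third equation itself.
-/

theorem eq_of_forall_hasDerivAt_zero {𝕜 E : Type*} [RCLike 𝕜] [NormedAddCommGroup E]
    [NormedSpace 𝕜 E] {φ : 𝕜 → E} (hφ : ∀ x, HasDerivAt φ 0 x) (x y : 𝕜) : φ x = φ y :=
  is_const_of_deriv_eq_zero (fun x => (hφ x).differentiableAt) (fun x => (hφ x).deriv) x y

theorem two_mul_sub_sq_eq_of_hasDerivAt {f g h : ℝ → ℝ}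
    (hg : ∀ t, HasDerivAt g (-(f t * h t)) t) (hh : ∀ t, HasDerivAt h (-(f t)) t) (t s : ℝ) :
    2 * g t - h t ^ 2 = 2 * g s - h s ^ 2 := by
  refine eq_of_forall_hasDerivAt_zero (φ := fun t => 2 * g t - h t ^ 2) (fun x => ?_) t s
  refine (((hg x).const_mul 2).sub ((hh x).pow 2)).congr_deriv ?_
  ring

theorem sq_add_sq_eq_of_hasDerivAt {f g k : ℝ → ℝ}
    (hf : ∀ t, HasDerivAt f (g t * k t) t) (hg : ∀ t, HasDerivAt g (-(f t * k t)) t)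
    (t s : ℝ) : f t ^ 2 + g t ^ 2 = f s ^ 2 + g s ^ 2 := by
  refine eq_of_forall_hasDerivAt_zero (φ := fun t => f t ^ 2 + g t ^ 2) (fun x => ?_) t s
  refine (((hf x).pow 2).add ((hg x).pow 2)).congr_deriv ?_
  ring

/-- Structural reduction for the ODE system `f' = gh`, `g' = -fh`, `h' = -f`:
`f = -h'`, `g = (h² - h(0)²)/2 + g(0)`, and `2g - h²` and `f² + g²` are conserved. -/
theorem stmt_17 (f g h : ℝ → ℝ)
    (hf : ∀ t, HasDerivAt f (g t * h t) t)
    (hg : ∀ t, HasDerivAt g (-(f t * h t)) t)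
    (hh : ∀ t, HasDerivAt h (-(f t)) t) :
    ∀ t : ℝ,
      f t = -deriv h t ∧
      g t = (h t ^ 2 - h 0 ^ 2) / 2 + g 0 ∧
      2 * g t - h t ^ 2 = 2 * g 0 - h 0 ^ 2 ∧
      f t ^ 2 + g t ^ 2 = f 0 ^ 2 + g 0 ^ 2 := by
  intro t
  have hgh := two_mul_sub_sq_eq_of_hasDerivAt hg hh t 0
  refine ⟨by rw [(hh t).deriv, neg_neg], by linarith, hgh, sq_add_sq_eq_of_hasDerivAt hf hg t 0⟩
end
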